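/- arXiv:1505.03464 — 4 statements merged into one kernel-verified Lean document; each statement's English description precedes it below -/
import Mathlib

section
/- If (⟨W, eₙ⟩)ₙ are independent standard Gaussian random variables and (sₙ) is a summable real sequence with 1 + sₙ > 0 for all n, then under the tilted probability measure with density proportional to exp(-½ Σₙ sₙ ⟨W,eₙ⟩²), the random variables ⟨W,eₙ⟩ are independent zero-mean Gaussians with variance (1+sₙ)^{-1}. -/
/-!
Write the exponent as `∑ fᵢ (Xᵢ)` with `fᵢ x = -sᵢ x² / 2` and split off finitely many
coordinates `T`: on the event where the series converges, the density
factors as `∏_{i ∈ T} exp (fᵢ (Xᵢ)) * G_T`, where `G_T` depends only on the coordinates outside `T`.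
Independence turns the tilted mass of a cylinder over `T` into a product of one-dimensional tilted
masses times `E[G_T]`, and this common factor cancels against the normalising constant.
In one dimension, tilting the standard Gaussian by `exp (-s x² / 2)` is completing the square:
it gives the centred Gaussian of variance `(1 + s)⁻¹`.
-/

open MeasureTheory ProbabilityTheory Real
open scoped NNReal ENNReal

theorem tilted_apply_mul_lintegral {α : Type*} [MeasurableSpace α] {μ : Measure α}
    {f : α → ℝ} (hf : Integrable (fun x => exp (f x)) μ) {s : Set α} (hs : MeasurableSet s) :
    μ.tilted f s * ∫⁻ x, ENNReal.ofReal (exp (f x)) ∂μ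
      = ∫⁻ x in s, ENNReal.ofReal (exp (f x)) ∂μ := by
  rcases eq_zero_or_neZero μ with rfl | _
  · simp
  have hZ := integral_exp_pos hf
  simp_rw [tilted_apply' _ _ hs, ENNReal.ofReal_div_of_pos hZ, div_eq_mul_inv,
    lintegral_mul_const' _ _ (ENNReal.inv_ne_top.2 (ENNReal.ofReal_pos.2 hZ).ne'),
    ← ofReal_integral_eq_lintegral_ofReal hf (ae_of_all _ fun x => (exp_pos _).le), mul_assoc,
    ENNReal.inv_mul_cancel (ENNReal.ofReal_pos.2 hZ).ne' ENNReal.ofReal_ne_top, mul_one]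

lemma gaussianPDFReal_mul_exp_neg_half_mul_sq {s : ℝ} (hs : 0 < 1 + s) (x : ℝ) :
    gaussianPDFReal 0 1 x * exp (-(1 / 2) * (s * x ^ 2))
      = (√(1 + s))⁻¹ * gaussianPDFReal 0 (1 + s).toNNReal⁻¹ x := by
  have hvar : (((1 + s).toNNReal⁻¹ : ℝ≥0) : ℝ) = (1 + s)⁻¹ := by
    rw [NNReal.coe_inv, Real.coe_toNNReal _ hs.le]
  have hsqrt : √(2 * π * (1 + s)⁻¹) = √(2 * π) * (√(1 + s))⁻¹ := by
    rw [Real.sqrt_mul (by positivity), Real.sqrt_inv]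
  have : √(1 + s) ≠ 0 := by positivity
  simp only [gaussianPDFReal, hvar, hsqrt, NNReal.coe_one, sub_zero]
  rw [mul_assoc, ← exp_add]
  field_simp
  ring_nf

theorem gaussianReal_tilted_neg_half_mul_sq {s : ℝ} (hs : 0 < 1 + s) :
    (gaussianReal 0 1).tilted (fun x => -(1 / 2) * (s * x ^ 2))
      = gaussianReal 0 (1 + s).toNNReal⁻¹ := by
  have hv : (1 + s).toNNReal⁻¹ ≠ 0 := by simpa using hs
  have hpdf := gaussianPDFReal_mul_exp_neg_half_mul_sq hs
  have hZ : ∫ x, exp (-(1 / 2) * (s * x ^ 2)) ∂gaussianReal 0 1 = (√(1 + s))⁻¹ := by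
    simp_rw [integral_gaussianReal_eq_integral_smul one_ne_zero, smul_eq_mul, hpdf,
      integral_const_mul, integral_gaussianPDFReal_eq_one 0 hv, mul_one]
  have hdens : gaussianPDF 0 1
        * (fun x => ENNReal.ofReal (exp (-(1 / 2) * (s * x ^ 2)) / (√(1 + s))⁻¹))
      = gaussianPDF 0 (1 + s).toNNReal⁻¹ := by
    ext x
    have : √(1 + s) ≠ 0 := by positivity
    rw [Pi.mul_apply, gaussianPDF, gaussianPDF, ← ENNReal.ofReal_mul (gaussianPDFReal_nonneg _ _ _),
      ← mul_div_assoc, hpdf]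
    field_simp
  rw [Measure.tilted, hZ, gaussianReal_of_var_ne_zero 0 one_ne_zero,
    gaussianReal_of_var_ne_zero 0 hv, ← withDensity_mul _ (measurable_gaussianPDF 0 1) (by fun_prop), hdens]

section Independence

variable {Ω ι : Type*} {β : ι → Type*} [MeasurableSpace Ω] [∀ i, MeasurableSpace (β i)]
  {P : Measure Ω} {X : ∀ i, Ω → β i}

theorem lintegral_prod_mul_eq_of_iIndepFun (hX : ∀ i, Measurable (X i)) (hindep : iIndepFun X P)
    (T : Finset ι) {g : ∀ i, β i → ℝ≥0∞} (hg : ∀ i ∈ T, Measurable (g i)) {G : Ω → ℝ≥0∞}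
    (hG : Measurable[⨆ n ∈ (↑T : Set ι)ᶜ, MeasurableSpace.comap (X n) inferInstance] G) :
    ∫⁻ ω, (∏ i ∈ T, g i (X i ω)) * G ω ∂P = (∏ i ∈ T, ∫⁻ ω, g i (X i ω) ∂P) * ∫⁻ ω, G ω ∂P := by
  have hle : ∀ i, MeasurableSpace.comap (X i) inferInstance ≤ ‹MeasurableSpace Ω› :=
    fun i => (hX i).comap_le
  have hsplit := indep_iSup_of_disjoint hle hindep (disjoint_compl_right (a := (↑T : Set ι)))
  have hprod : Measurable[⨆ i ∈ (↑T : Set ι), MeasurableSpace.comap (X i) inferInstance]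
      fun ω => ∏ i ∈ T, g i (X i ω) :=
    Finset.measurable_prod T fun i hi => ((hg i hi).comp (comap_measurable (X i))).mono
      (le_iSup₂ (f := fun n (_ : n ∈ (↑T : Set ι)) => MeasurableSpace.comap (X n) inferInstance)
        i hi) le_rfl
  rw [lintegral_mul_eq_lintegral_mul_lintegral_of_independent_measurableSpace
    (iSup₂_le fun i _ => hle i) (iSup₂_le fun i _ => hle i) hsplit hprod hG]
  have hT : iIndepFun (fun i : T => g i ∘ X i) P :=
    (hindep.precomp Subtype.val_injective).comp _ fun i => hg i i.2
  congr 1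
  have h := lintegral_prod_eq_prod_lintegral_of_indepFun Finset.univ _ hT
    fun i => (hg i i.2).comp (hX i)
  simp only [Function.comp_apply, Finset.univ_eq_attach] at h
  rwa [Finset.prod_attach T (fun i => ∫⁻ ω, g i (X i ω) ∂P),
    lintegral_congr fun ω => Finset.prod_attach T fun i => g i (X i ω)] at h

theorem iIndepFun_and_map_eq_of_measure_iInter_preimage (hX : ∀ i, Measurable (X i))
    {ν : ∀ i, Measure (β i)}
    (h : ∀ (T : Finset ι) (A : ∀ i, Set (β i)), (∀ i ∈ T, MeasurableSet (A i)) →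
      P (⋂ i ∈ T, X i ⁻¹' A i) = ∏ i ∈ T, ν i (A i)) :
    iIndepFun X P ∧ ∀ i, P.map (X i) = ν i := by
  have hmarg : ∀ i (B : Set (β i)), MeasurableSet B → P (X i ⁻¹' B) = ν i B := by
    classical
    intro i B hB
    simpa using h {i} (Function.update (fun _ => Set.univ) i B) (by simp [hB])
  refine ⟨iIndepFun_iff_measure_inter_preimage_eq_mul.2 fun T A hA => ?_, fun i => ?_⟩
  · rw [h T A hA]
    exact Finset.prod_congr rfl fun i hi => (hmarg i (A i) (hA i hi)).symm
  · ext B hB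
    rw [Measure.map_apply (hX i) hB, hmarg i B hB]

end Independence

section TiltedTsum

variable {Ω ι : Type*} {β : ι → Type*} [MeasurableSpace Ω] [∀ i, MeasurableSpace (β i)]
  {P : Measure Ω} {X : ∀ i, Ω → β i} {f : ∀ i, β i → ℝ}

theorem setLIntegral_iInter_preimage_exp_tsum [Countable ι] (hX : ∀ i, Measurable (X i))
    (hindep : iIndepFun X P) (hf : ∀ i, Measurable (f i))
    (hsum : ∀ᵐ ω ∂P, Summable fun i => f i (X i ω)) (T : Finset ι) {A : ∀ i, Set (β i)}
    (hA : ∀ i ∈ T, MeasurableSet (A i)) :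
    ∫⁻ ω in ⋂ i ∈ T, X i ⁻¹' A i, ENNReal.ofReal (exp (∑' i, f i (X i ω))) ∂P
      = (∏ i ∈ T, ∫⁻ x in A i, ENNReal.ofReal (exp (f i x)) ∂P.map (X i))
          * ∫⁻ ω, ENNReal.ofReal (exp (∑' i : ↥(↑T : Set ι)ᶜ, f i (X i ω))) ∂P := by
  set φ : ∀ i, β i → ℝ≥0∞ := fun i x => ENNReal.ofReal (exp (f i x))
  have hφ : ∀ i, Measurable (φ i) := fun i => (hf i).exp.ennreal_ofReal
  set G : Ω → ℝ≥0∞ := fun ω => ENNReal.ofReal (exp (∑' i : ↥(↑T : Set ι)ᶜ, f i (X i ω)))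
  have hG : Measurable[⨆ n ∈ (↑T : Set ι)ᶜ, MeasurableSpace.comap (X n) inferInstance] G := by
    let := ⨆ n ∈ (↑T : Set ι)ᶜ, MeasurableSpace.comap (X n) inferInstance
    refine (Measurable.tsum fun i : ↥(↑T : Set ι)ᶜ => (hf i).comp ?_).exp.ennreal_ofReal
    exact (comap_measurable (X i)).mono
      (le_iSup₂ (f := fun n (_ : n ∈ (↑T : Set ι)ᶜ) => MeasurableSpace.comap (X n) inferInstance)
        i.1 i.2) le_rfl
  have hfactor : ∀ᵐ ω ∂P,
      ENNReal.ofReal (exp (∑' i, f i (X i ω))) = (∏ i ∈ T, φ i (X i ω)) * G ω := by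
    filter_upwards [hsum] with ω h
    rw [← h.sum_add_tsum_compl, exp_add, exp_sum, ENNReal.ofReal_mul (by positivity),
      ENNReal.ofReal_prod_of_nonneg fun i _ => (exp_pos _).le]
  have hC : MeasurableSet (⋂ i ∈ T, X i ⁻¹' A i) :=
    Finset.measurableSet_biInter T fun i hi => hX i (hA i hi)
  have hcyl : ∀ ω, (⋂ i ∈ T, X i ⁻¹' A i).indicator (fun ω => ∏ i ∈ T, φ i (X i ω)) ω
      = ∏ i ∈ T, (A i).indicator (φ i) (X i ω) := by
    intro ω
    simp_rw [← Set.indicator_comp_right]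
    rw [prod_indicator_apply, Finset.prod_fn]
    rfl
  calc ∫⁻ ω in ⋂ i ∈ T, X i ⁻¹' A i, ENNReal.ofReal (exp (∑' i, f i (X i ω))) ∂P
      = ∫⁻ ω in ⋂ i ∈ T, X i ⁻¹' A i, (∏ i ∈ T, φ i (X i ω)) * G ω ∂P :=
        lintegral_congr_ae (ae_restrict_of_ae hfactor)
    _ = ∫⁻ ω, (∏ i ∈ T, (A i).indicator (φ i) (X i ω)) * G ω ∂P := by
        rw [← lintegral_indicator hC]
        simp_rw [Set.indicator_mul_left _ _ G, hcyl]
    _ = (∏ i ∈ T, ∫⁻ ω, (A i).indicator (φ i) (X i ω) ∂P) * ∫⁻ ω, G ω ∂P :=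
        lintegral_prod_mul_eq_of_iIndepFun hX hindep T
          (fun i hi => (hφ i).indicator (hA i hi)) hG
    _ = _ := by
        congr 1
        refine Finset.prod_congr rfl fun i hi => ?_
        rw [← lintegral_indicator (hA i hi), lintegral_map ((hφ i).indicator (hA i hi)) (hX i)]

theorem iIndepFun_tilted_tsum [Countable ι] (hX : ∀ i, Measurable (X i))
    (hindep : iIndepFun X P) (hf : ∀ i, Measurable (f i))
    (hsum : ∀ᵐ ω ∂P, Summable fun i => f i (X i ω))
    (hint : Integrable (fun ω => exp (∑' i, f i (X i ω))) P) :
    iIndepFun X (P.tilted fun ω => ∑' i, f i (X i ω))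
      ∧ ∀ i, (P.tilted fun ω => ∑' i, f i (X i ω)).map (X i) = (P.map (X i)).tilted (f i) := by
  have := hindep.isProbabilityMeasure
  set N := ∫⁻ ω, ENNReal.ofReal (exp (∑' i, f i (X i ω))) ∂P with hN
  have hN0 : N ≠ 0 := by
    rw [hN, ← ofReal_integral_eq_lintegral_ofReal hint (ae_of_all _ fun ω => (exp_pos _).le)]
    exact (ENNReal.ofReal_pos.2 (integral_exp_pos hint)).ne'
  have hNtop : N ≠ ⊤ := hint.lintegral_lt_top.ne
  refine iIndepFun_and_map_eq_of_measure_iInter_preimage hX fun T A hA => ?_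
  set m : ι → ℝ≥0∞ := fun i => ∫⁻ x, ENNReal.ofReal (exp (f i x)) ∂P.map (X i)
  set K := ∫⁻ ω, ENNReal.ofReal (exp (∑' i : ↥(↑T : Set ι)ᶜ, f i (X i ω))) ∂P
  have htot : N = (∏ i ∈ T, m i) * K := by
    simpa using setLIntegral_iInter_preimage_exp_tsum hX hindep hf hsum T (A := fun _ => Set.univ)
      (fun _ _ => MeasurableSet.univ)
  have hintegrable : ∀ i ∈ T, Integrable (fun x => exp (f i x)) (P.map (X i)) := by
    classical
    intro i hi
    have hsplit : N = m i * ((∏ j ∈ T.erase i, m j) * K) := by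
      rw [htot, ← mul_assoc, Finset.mul_prod_erase T m hi]
    have hrest : (∏ j ∈ T.erase i, m j) * K ≠ 0 := by
      intro h0; rw [h0, mul_zero] at hsplit; exact hN0 hsplit
    have hmi : m i ≠ ⊤ := fun htop =>
      hNtop (hsplit ▸ ENNReal.mul_eq_top.2 (Or.inr ⟨htop, hrest⟩))
    exact ⟨(hf i).exp.aestronglyMeasurable,
      (hasFiniteIntegral_iff_ofReal (ae_of_all _ fun x => (exp_pos _).le)).2 hmi.lt_top⟩
  have hC : MeasurableSet (⋂ i ∈ T, X i ⁻¹' A i) :=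
    Finset.measurableSet_biInter T fun i hi => hX i (hA i hi)
  refine (ENNReal.mul_left_inj hN0 hNtop).1 ?_
  calc (P.tilted fun ω => ∑' i, f i (X i ω)) (⋂ i ∈ T, X i ⁻¹' A i) * N
      = (∏ i ∈ T, ∫⁻ x in A i, ENNReal.ofReal (exp (f i x)) ∂P.map (X i)) * K := by
        rw [tilted_apply_mul_lintegral hint hC,
          setLIntegral_iInter_preimage_exp_tsum hX hindep hf hsum T hA]
    _ = (∏ i ∈ T, (P.map (X i)).tilted (f i) (A i)) * N := by
        rw [Finset.prod_congr rfl fun i hi =>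
            (tilted_apply_mul_lintegral (hintegrable i hi) (hA i hi)).symm,
          Finset.prod_mul_distrib, mul_assoc, htot]

end TiltedTsum

theorem tilted_gaussian_indep_general
    {Ω : Type*} [MeasurableSpace Ω] (P : Measure Ω)
    (X : ℕ → Ω → ℝ) (hXmeas : ∀ n, Measurable (X n))
    (hindep : iIndepFun X P)
    (hlaw : ∀ n, Measure.map (X n) P = gaussianReal 0 1)
    (s : ℕ → ℝ) (hs1 : ∀ n, 0 < 1 + s n)
    (hconv : ∀ᵐ ω ∂P, Summable fun n => s n * (X n ω) ^ 2)
    (D : Ω → ℝ) (hD : ∀ ω, D ω = Real.exp (-(1 / 2) * ∑' n, s n * (X n ω) ^ 2))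
    (hDint : Integrable D P)
    (P' : Measure Ω)
    (hP' : P' = P.withDensity fun ω => ENNReal.ofReal (D ω / ∫ x, D x ∂P)) :
    iIndepFun X P' ∧
      ∀ n, Measure.map (X n) P' = gaussianReal 0 (Real.toNNReal (1 + s n))⁻¹ := by
  obtain rfl : D = fun ω => exp (∑' n, -(1 / 2) * (s n * X n ω ^ 2)) :=
    funext fun ω => by rw [hD, tsum_mul_left]
  obtain rfl : P' = P.tilted fun ω => ∑' n, -(1 / 2) * (s n * X n ω ^ 2) := hP'
  have hf : ∀ n, Measurable fun x : ℝ => -(1 / 2) * (s n * x ^ 2) := fun n => by fun_prop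
  have hsum : ∀ᵐ ω ∂P, Summable fun n => -(1 / 2) * (s n * X n ω ^ 2) :=
    hconv.mono fun ω h => h.mul_left _
  obtain ⟨hindep', hmap⟩ := iIndepFun_tilted_tsum hXmeas hindep hf hsum hDint
  exact ⟨hindep', fun n => by rw [hmap, hlaw]; exact gaussianReal_tilted_neg_half_mul_sq (hs1 n)⟩

/-- If `(X n)` are independent standard Gaussian random variables and `(s n)` is a summable
real sequence with `1 + s n > 0` for all `n`, then under the tilted probability measure with
density proportional to `exp(-½ Σ n, s n * (X n)²)`, the random variables `X n` are independent
zero-mean Gaussians with variance `(1 + s n)⁻¹`. -/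
theorem tilted_gaussian_indep
    {Ω : Type*} [MeasurableSpace Ω] (P : Measure Ω) [IsProbabilityMeasure P]
    (X : ℕ → Ω → ℝ) (hXmeas : ∀ n, Measurable (X n))
    (hindep : iIndepFun X P)
    (hlaw : ∀ n, Measure.map (X n) P = gaussianReal 0 1)
    (s : ℕ → ℝ) (hs : Summable s) (hs1 : ∀ n, 0 < 1 + s n)
    (hconv : ∀ᵐ ω ∂P, Summable fun n => s n * (X n ω) ^ 2)
    (D : Ω → ℝ) (hD : ∀ ω, D ω = Real.exp (-(1 / 2) * ∑' n, s n * (X n ω) ^ 2))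
    (hDint : Integrable D P)
    (P' : Measure Ω)
    (hP' : P' = P.withDensity fun ω => ENNReal.ofReal (D ω / ∫ x, D x ∂P)) :
    iIndepFun X P' ∧
      ∀ n, Measure.map (X n) P' = gaussianReal 0 (Real.toNNReal (1 + s n))⁻¹ :=
  tilted_gaussian_indep_general P X hXmeas hindep hlaw s hs1 hconv D hD hDint P' hP'
end

section
/- Let (ψ_t) be the Hamiltonian flow on T*M of a smooth Hamiltonian H, preserving the canonical symplectic form β. Define J₁ξ₀ = (∂/∂ε)|_{ε=0} π ψ₁(λ₀ + εξ₀) for ξ₀ ∈ T*_x M and K₀ξ₁ = (∂/∂ε)|_{ε=0} π ψ_{-1}(λ₁ − εξ₁) for ξ₁ ∈ T*_y M, where λ₁ = ψ₁(λ₀), x = πλ₀, y = πλ₁. Then J₁ = K₀*, i.e. ⟨J₁ξ₀, ξ₁⟩ = ⟨ξ₀, K₀ξ₁⟩ for all ξ₀, ξ₁. -/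
open scoped RealInnerProductSpace

/-- `J₁ = K₀*` for the differentials of a symplectic flow, in local coordinates.
The differential `Ψ` of the time-one flow `ψ₁` at `λ₀` is a linear map of
`T_{λ₀}(T*M) ≅ ℝ^d × ℝ^d` preserving the canonical symplectic form
`β((x,p),(y,q)) = ⟨q,x⟩ − ⟨p,y⟩`.  With `J₁ ξ₀ = π_* Ψ (ξ₀)~ = (Ψ (0,ξ₀)).1` and
`K₀ ξ₁ = −π_* Ψ⁻¹ (ξ₁)~ = −(Ψ⁻¹ (0,ξ₁)).1`, one has `⟨J₁ ξ₀, ξ₁⟩ = ⟨ξ₀, K₀ ξ₁⟩`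
for all `ξ₀, ξ₁`. -/
theorem symplectic_flow_J_eq_K_adjoint (d : ℕ)
    (Ψ : (EuclideanSpace ℝ (Fin d) × EuclideanSpace ℝ (Fin d)) ≃L[ℝ]
        (EuclideanSpace ℝ (Fin d) × EuclideanSpace ℝ (Fin d)))
    (hΨ : ∀ u v : EuclideanSpace ℝ (Fin d) × EuclideanSpace ℝ (Fin d),
      ⟪(Ψ u).2, (Ψ v).1⟫ - ⟪(Ψ v).2, (Ψ u).1⟫ = ⟪u.2, v.1⟫ - ⟪v.2, u.1⟫) :
    ∀ ξ₀ ξ₁ : EuclideanSpace ℝ (Fin d),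
      ⟪(Ψ (0, ξ₀)).1, ξ₁⟫ = ⟪ξ₀, -(Ψ.symm (0, ξ₁)).1⟫ := by
  intro ξ₀ ξ₁
  have h := hΨ (0, ξ₀) (Ψ.symm (0, ξ₁))
  rw [Ψ.apply_symm_apply] at h
  simp only [inner_zero_right, zero_sub] at h
  rw [inner_neg_right, real_inner_comm]
  linarith [h]
end

section
/- Let a(x) = Σ_{ℓ=1}^m X_ℓ(x) ⊗ X_ℓ(x) for smooth vector fields X_ℓ on M. Given x ∈ M and h ∈ H⁰(ℝ^m), let ω = φ(x,h) be the solution of ω̇_t = Σ_ℓ X_ℓ(ω_t)ḣ_t^ℓ, ω_0 = x, and let π_t be defined by π̇_t = p_X(ω_t)ḣ_t where p_X(x) is the orthogonal projection of ℝ^m onto (ker X(x))^⊥. Then ω has finite energy and I(ω) = ‖π‖² ≤ ‖h‖². -/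
open Set MeasureTheory intervalIntegral
open scoped RealInnerProductSpace

/-- Let `a(x) = Σ_ℓ X_ℓ(x) ⊗ X_ℓ(x)` for smooth vector fields `X_ℓ` (in a chart, on `ℝ^d`).
Given `x` and a Cameron–Martin control `h`, let `ω = φ(x,h)` solve
`ω̇ t = Σ_ℓ X_ℓ(ω t) ḣ t ℓ`, `ω 0 = x`, and let `π` be defined by
`π̇ t = p_X(ω t) ḣ t` where `p_X(x)` is the orthogonal projection of `ℝ^m` onto
`(ker X(x))^⊥`.  Then `ω` has finite energy and `I(ω) = ‖π‖² ≤ ‖h‖²`. -/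
theorem energy_eq_projected_control (d m : ℕ)
    (X : Fin m → EuclideanSpace ℝ (Fin d) → EuclideanSpace ℝ (Fin d))
    (hX : ∀ ℓ, ContDiff ℝ (⊤ : ℕ∞) (X ℓ))
    (Xmap : EuclideanSpace ℝ (Fin d) →
      (EuclideanSpace ℝ (Fin m) →ₗ[ℝ] EuclideanSpace ℝ (Fin d)))
    (hXmap : ∀ x k, Xmap x k = ∑ ℓ, k ℓ • X ℓ x)
    (x : EuclideanSpace ℝ (Fin d))
    (ω : ℝ → EuclideanSpace ℝ (Fin d))
    (h' : ℝ → EuclideanSpace ℝ (Fin m))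
    (hh'meas : AEStronglyMeasurable h' (volume.restrict (Icc (0:ℝ) 1)))
    (hh'int : Integrable (fun t => ‖h' t‖ ^ 2) (volume.restrict (Icc (0:ℝ) 1)))
    (hω0 : ω 0 = x)
    (hωode : ∀ᵐ t ∂(volume.restrict (Icc (0:ℝ) 1)),
      HasDerivAt ω (∑ ℓ, h' t ℓ • X ℓ (ω t)) t)
    (π' : ℝ → EuclideanSpace ℝ (Fin m))
    (hπ' : ∀ t, π' t =
      (Submodule.orthogonalProjectionOnto ((LinearMap.ker (Xmap (ω t)))ᗮ) (h' t) :
        EuclideanSpace ℝ (Fin m))) :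
    ∃ ξ : ℝ → EuclideanSpace ℝ (Fin d),
      (∀ t ∈ Icc (0:ℝ) 1,
        (∑ ℓ, ⟪ξ t, X ℓ (ω t)⟫ • X ℓ (ω t)) = ∑ ℓ, h' t ℓ • X ℓ (ω t)) ∧
      Integrable (fun t => ‖π' t‖ ^ 2) (volume.restrict (Icc (0:ℝ) 1)) ∧
      (∫ t in (0:ℝ)..1, ∑ ℓ, ⟪ξ t, X ℓ (ω t)⟫ ^ 2)
        = ∫ t in (0:ℝ)..1, ‖π' t‖ ^ 2 ∧
      (∫ t in (0:ℝ)..1, ‖π' t‖ ^ 2) ≤ ∫ t in (0:ℝ)..1, ‖h' t‖ ^ 2 := by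
  classical
  set B : ℝ → (EuclideanSpace ℝ (Fin d) →ₗ[ℝ] EuclideanSpace ℝ (Fin m)) :=
    fun t => LinearMap.adjoint (Xmap (ω t)) with hB
  -- the adjoint has coordinates ⟪X ℓ (ω t), ·⟫
  have hA_single : ∀ t ℓ, Xmap (ω t) (EuclideanSpace.single ℓ 1) = X ℓ (ω t) := by
    intro t ℓ
    rw [hXmap]
    simp [EuclideanSpace.single_apply, ite_smul]
  have hB_apply : ∀ t w ℓ, B t w ℓ = ⟪X ℓ (ω t), w⟫ := by
    intro t w ℓ
    have h1 : ⟪EuclideanSpace.single ℓ (1:ℝ), B t w⟫ = B t w ℓ := by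
      rw [EuclideanSpace.inner_single_left]; simp
    rw [← h1, hB, LinearMap.adjoint_inner_right, hA_single]
  have hnorm_sq : ∀ (v : EuclideanSpace ℝ (Fin m)), ‖v‖ ^ 2 = ∑ ℓ, v ℓ ^ 2 := by
    intro v
    rw [EuclideanSpace.norm_sq_eq]
    exact Finset.sum_congr rfl fun ℓ _ => by rw [Real.norm_eq_abs, sq_abs]
  -- basic facts about the projection
  have hπmem : ∀ t, π' t ∈ (LinearMap.ker (Xmap (ω t)))ᗮ := by
    intro t; rw [hπ']; exact Submodule.coe_mem _
  have hsub : ∀ t, h' t - π' t ∈ ((LinearMap.ker (Xmap (ω t)))ᗮ)ᗮ := by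
    intro t; rw [hπ']; exact Submodule.sub_starProjection_mem_orthogonal _
  have hker : ∀ t, h' t - π' t ∈ LinearMap.ker (Xmap (ω t)) := by
    intro t
    have h0 := hsub t
    rwa [Submodule.orthogonal_orthogonal] at h0
  have hAπ : ∀ t, Xmap (ω t) (π' t) = Xmap (ω t) (h' t) := by
    intro t
    have h0 : Xmap (ω t) (h' t - π' t) = 0 := hker t
    rw [map_sub, sub_eq_zero] at h0
    exact h0.symm
  have hinner : ∀ t v, v ∈ (LinearMap.ker (Xmap (ω t)))ᗮ → ⟪h' t, v⟫ = ⟪π' t, v⟫ := by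
    intro t v hv
    have h0 : ⟪v, h' t - π' t⟫ = 0 :=
      Submodule.inner_right_of_mem_orthogonal hv (hsub t)
    rw [inner_sub_right] at h0
    have h1 := real_inner_comm v (h' t)
    have h2 := real_inner_comm v (π' t)
    linarith
  -- range of the adjoint is the orthogonal complement of the kernel
  have hBrange : ∀ t, LinearMap.range (B t) = (LinearMap.ker (Xmap (ω t)))ᗮ := by
    intro t
    apply le_antisymm
    · rintro _ ⟨w, rfl⟩
      rw [Submodule.mem_orthogonal]
      intro u hu
      rw [hB, LinearMap.adjoint_inner_right, LinearMap.mem_ker.mp hu, inner_zero_left]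
    · have h1 : (LinearMap.range (B t))ᗮ ≤ LinearMap.ker (Xmap (ω t)) := by
        intro u hu
        rw [LinearMap.mem_ker, ← inner_self_eq_zero (𝕜 := ℝ)]
        have h2 : ⟪u, B t (Xmap (ω t) u)⟫ = 0 :=
          Submodule.inner_left_of_mem_orthogonal (LinearMap.mem_range_self _ _) hu
        rwa [hB, LinearMap.adjoint_inner_right] at h2
      have h3 := Submodule.orthogonal_le h1
      rwa [Submodule.orthogonal_orthogonal] at h3
  -- choose ξ with (B t) (ξ t) = π' t
  have hξex : ∀ t, ∃ w, B t w = π' t := by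
    intro t
    have h0 : π' t ∈ LinearMap.range (B t) := by rw [hBrange]; exact hπmem t
    exact h0
  choose ξ hξ using hξex
  have hcoord : ∀ t ℓ, ⟪ξ t, X ℓ (ω t)⟫ = π' t ℓ := by
    intro t ℓ
    rw [← hξ t, hB_apply, real_inner_comm]
  have hconj1 : ∀ t, (∑ ℓ, ⟪ξ t, X ℓ (ω t)⟫ • X ℓ (ω t)) = ∑ ℓ, h' t ℓ • X ℓ (ω t) := by
    intro t
    have h1 : (∑ ℓ, ⟪ξ t, X ℓ (ω t)⟫ • X ℓ (ω t)) = Xmap (ω t) (π' t) := by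
      rw [hXmap]
      exact Finset.sum_congr rfl fun ℓ _ => by rw [hcoord]
    rw [h1, hAπ, hXmap]
  have henergy : ∀ t, (∑ ℓ, ⟪ξ t, X ℓ (ω t)⟫ ^ 2) = ‖π' t‖ ^ 2 := by
    intro t
    rw [hnorm_sq]
    exact Finset.sum_congr rfl fun ℓ _ => by rw [hcoord]
  have hpyth : ∀ t, ‖h' t‖ ^ 2 = ‖π' t‖ ^ 2 + ‖h' t - π' t‖ ^ 2 := by
    intro t
    have h0 : ⟪π' t, h' t - π' t⟫ = 0 :=
      Submodule.inner_right_of_mem_orthogonal (hπmem t) (hsub t)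
    have h1 : h' t = π' t + (h' t - π' t) := by abel
    calc ‖h' t‖ ^ 2 = ‖π' t + (h' t - π' t)‖ ^ 2 := by rw [← h1]
    _ = ‖π' t‖ ^ 2 + ‖h' t - π' t‖ ^ 2 := by rw [norm_add_sq_real, h0]; ring
  have hle : ∀ t, ‖π' t‖ ^ 2 ≤ ‖h' t‖ ^ 2 := by
    intro t
    have := hpyth t
    nlinarith [sq_nonneg ‖h' t - π' t‖]
  -- the variational formula for ‖π' t‖²
  have hub : ∀ t w, 2 * ⟪h' t, B t w⟫ - ‖B t w‖ ^ 2 ≤ ‖π' t‖ ^ 2 := by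
    intro t w
    have hmem : B t w ∈ (LinearMap.ker (Xmap (ω t)))ᗮ := by
      rw [← hBrange]; exact LinearMap.mem_range_self _ _
    have h1 : ⟪h' t, B t w⟫ = ⟪π' t, B t w⟫ := hinner t _ hmem
    have h2 : ‖π' t - B t w‖ ^ 2 = ‖π' t‖ ^ 2 - 2 * ⟪π' t, B t w⟫ + ‖B t w‖ ^ 2 :=
      norm_sub_sq_real _ _
    nlinarith [sq_nonneg ‖π' t - B t w‖]
  have hval : ∀ t, 2 * ⟪h' t, B t (ξ t)⟫ - ‖B t (ξ t)‖ ^ 2 = ‖π' t‖ ^ 2 := by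
    intro t
    rw [hξ t, hinner t _ (hπmem t), real_inner_self_eq_norm_sq]
    ring
  obtain ⟨w, hw⟩ := TopologicalSpace.exists_dense_seq (EuclideanSpace ℝ (Fin d))
  set F : ℕ → ℝ → ℝ := fun n t => 2 * ⟪h' t, B t (w n)⟫ - ‖B t (w n)‖ ^ 2 with hF
  have hlub : ∀ t, IsLUB {a | ∃ n, F n t = a} (‖π' t‖ ^ 2) := by
    intro t
    constructor
    · rintro a ⟨n, rfl⟩
      exact hub t (w n)
    · intro b hb
      have hBc : Continuous (B t) := (B t).continuous_of_finiteDimensional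
      have hcont : Continuous fun u => 2 * ⟪h' t, B t u⟫ - ‖B t u‖ ^ 2 :=
        (continuous_const.mul (continuous_const.inner hBc)).sub ((hBc.norm).pow 2)
      obtain ⟨u, hu_mem, hu_lim⟩ := mem_closure_iff_seq_limit.mp (hw (ξ t))
      have hT : Filter.Tendsto (fun k => 2 * ⟪h' t, B t (u k)⟫ - ‖B t (u k)‖ ^ 2)
          Filter.atTop (nhds (2 * ⟪h' t, B t (ξ t)⟫ - ‖B t (ξ t)‖ ^ 2)) :=
        (hcont.tendsto _).comp hu_lim
      rw [hval t] at hT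
      refine le_of_tendsto hT (Filter.Eventually.of_forall fun k => ?_)
      obtain ⟨n, hn⟩ := hu_mem k
      exact hb ⟨n, by rw [hF]; simp only; rw [hn]⟩
  -- measurability of ω
  have hωmeas : AEMeasurable ω (volume.restrict (Icc (0:ℝ) 1)) := by
    have h0 : (volume.restrict (Icc (0:ℝ) 1))
        {t | ¬ HasDerivAt ω (∑ ℓ, h' t ℓ • X ℓ (ω t)) t} = 0 := ae_iff.mp hωode
    rw [Measure.restrict_apply' measurableSet_Icc] at h0
    obtain ⟨N, hsubN, hNmeas, hNnull⟩ := exists_measurable_superset_of_null h0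
    have hScont : ContinuousOn ω (Icc (0:ℝ) 1 \ N) := by
      intro t ht
      have hP : HasDerivAt ω (∑ ℓ, h' t ℓ • X ℓ (ω t)) t := by
        by_contra hc
        exact ht.2 (hsubN ⟨hc, ht.1⟩)
      exact hP.continuousAt.continuousWithinAt
    have hmeasS : MeasurableSet (Icc (0:ℝ) 1 \ N) := measurableSet_Icc.diff hNmeas
    have hae : (Icc (0:ℝ) 1 \ N : Set ℝ) =ᵐ[volume] (Icc (0:ℝ) 1 : Set ℝ) := by
      rw [ae_eq_set]
      constructor
      · have he : (Icc (0:ℝ) 1 \ N) \ Icc (0:ℝ) 1 = ∅ := by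
          ext t; simp only [mem_diff, mem_empty_iff_false, iff_false]
          rintro ⟨⟨h1, _⟩, h2⟩; exact h2 h1
        rw [he]; simp
      · refine measure_mono_null ?_ hNnull
        intro t ht
        by_contra hc
        exact ht.2 ⟨ht.1, hc⟩
    have h1 := hScont.aemeasurable (μ := volume) hmeasS
    rwa [Measure.restrict_congr_set hae] at h1
  -- measurability of each F n
  have hFmeas : ∀ n, AEMeasurable (F n) (volume.restrict (Icc (0:ℝ) 1)) := by
    intro n
    have hform : ∀ t, F n t
        = 2 * (∑ ℓ, h' t ℓ * ⟪X ℓ (ω t), w n⟫) - ∑ ℓ, ⟪X ℓ (ω t), w n⟫ ^ 2 := by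
      intro t
      rw [hF]
      simp only
      congr 1
      · congr 1
        rw [PiLp.inner_apply]
        refine Finset.sum_congr rfl fun ℓ _ => ?_
        rw [hB_apply]
        simp [RCLike.inner_apply]
        ring
      · rw [hnorm_sq]
        exact Finset.sum_congr rfl fun ℓ _ => by rw [hB_apply]
    have hhℓ : ∀ ℓ, AEMeasurable (fun t => h' t ℓ) (volume.restrict (Icc (0:ℝ) 1)) := by
      intro ℓ
      exact (EuclideanSpace.proj ℓ).continuous.measurable.comp_aemeasurable hh'meas.aemeasurable
    have hXw : ∀ ℓ, AEMeasurable (fun t => ⟪X ℓ (ω t), w n⟫)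
        (volume.restrict (Icc (0:ℝ) 1)) := by
      intro ℓ
      exact (((hX ℓ).continuous).inner continuous_const).measurable.comp_aemeasurable hωmeas
    have hm : AEMeasurable
        (fun t => 2 * (∑ ℓ, h' t ℓ * ⟪X ℓ (ω t), w n⟫) - ∑ ℓ, ⟪X ℓ (ω t), w n⟫ ^ 2)
        (volume.restrict (Icc (0:ℝ) 1)) := by
      refine AEMeasurable.sub (AEMeasurable.const_mul ?_ 2) ?_
      · exact Finset.aemeasurable_fun_sum _ fun ℓ _ => (hhℓ ℓ).mul (hXw ℓ)
      · exact Finset.aemeasurable_fun_sum _ fun ℓ _ => (hXw ℓ).pow_const 2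
    exact hm.congr (Filter.Eventually.of_forall fun t => (hform t).symm)
  have hp2meas : AEMeasurable (fun t => ‖π' t‖ ^ 2) (volume.restrict (Icc (0:ℝ) 1)) :=
    AEMeasurable.isLUB hFmeas (Filter.Eventually.of_forall fun t => hlub t)
  have hp2int : Integrable (fun t => ‖π' t‖ ^ 2) (volume.restrict (Icc (0:ℝ) 1)) := by
    refine hh'int.mono hp2meas.aestronglyMeasurable (Filter.Eventually.of_forall fun t => ?_)
    rw [Real.norm_eq_abs, Real.norm_eq_abs, abs_of_nonneg (sq_nonneg _),
      abs_of_nonneg (sq_nonneg _)]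
    exact hle t
  refine ⟨ξ, fun t _ => hconj1 t, hp2int, ?_, ?_⟩
  · exact intervalIntegral.integral_congr fun t _ => henergy t
  · have h1 : IntervalIntegrable (fun t => ‖π' t‖ ^ 2) volume 0 1 := by
      apply MeasureTheory.IntegrableOn.intervalIntegrable
      rwa [Set.uIcc_of_le zero_le_one]
    have h2 : IntervalIntegrable (fun t => ‖h' t‖ ^ 2) volume 0 1 := by
      apply MeasureTheory.IntegrableOn.intervalIntegrable
      rwa [Set.uIcc_of_le zero_le_one]
    exact intervalIntegral.integral_mono_on zero_le_one h1 h2 fun t _ => hle t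
end

section
/- Let a be a continuous nonnegative quadratic form on the cotangent bundle of a manifold M, let ω ∈ H^{x,y} have driving path ξ with ω_t ∈ K for some t ∈ [0,1], where K ⊆ M is closed. If w⁻, w⁺ are C¹ functions on a neighbourhood of the path with a(∇w^±, ∇w^±) ≤ 1 everywhere and w⁺ = w⁻ on K, then w⁺(y) − w⁻(x) ≤ √(I(ω)). -/
/-!
Along `ω`, a function `w` with `a(∇w, ∇w) ≤ 1` grows at speed
`⟪∇w, a(ω) ξ⟫ ≤ √a(∇w, ∇w) · √⟪ξ, a(ω) ξ⟫ ≤ √⟪ξ, a(ω) ξ⟫` (Cauchy–Schwarz for the form `a`).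
Applied to `w⁻` on `[0, t]` and to `w⁺` on `[t, 1]`, where `ω t ∈ K` and so `w⁺(ω t) = w⁻(ω t)`,
this bounds `w⁺(y) - w⁻(x)` by `∫₀¹ √⟪ξ, a(ω) ξ⟫ ≤ √I(ω)` (Jensen).
As `ω` is merely absolutely continuous, the growth bound comes from continuous induction on a
local estimate: the mean value theorem on a short chord `[ω t, ω u]`, where continuity of `a`
and `∇w` gives `a(ω s)(∇w z, ∇w z) < C²` for any fixed `C > 1`; finally `C → 1`.
-/

open Set MeasureTheory intervalIntegral
open scoped RealInnerProductSpace
open Filter Topology Metric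
open scoped Interval

theorem IntervalIntegrable.mono_Icc {F : Type*} [NormedAddCommGroup F] {f : ℝ → F}
    {μ : Measure ℝ} {p q t u : ℝ} (hf : IntervalIntegrable f μ p q) (ht : t ∈ Icc p q)
    (hu : u ∈ Icc p q) : IntervalIntegrable f μ t u :=
  hf.mono_set (uIcc_subset_uIcc (Icc_subset_uIcc ht) (Icc_subset_uIcc hu))

theorem IntervalIntegrable.sqrt {e : ℝ → ℝ} {p q : ℝ} (he : IntervalIntegrable e volume p q)
    (he0 : ∀ t, 0 ≤ e t) : IntervalIntegrable (fun t => √(e t)) volume p q := by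
  refine (he.add (intervalIntegrable_const (c := 1))).mono_fun
    (Real.continuous_sqrt.comp_aestronglyMeasurable he.def'.aestronglyMeasurable)
    (ae_of_all _ fun t => ?_)
  have h1 : √(e t) ≤ e t + 1 := by
    nlinarith [Real.sq_sqrt (he0 t), sq_nonneg (√(e t) - 1)]
  simp only [Real.norm_eq_abs, abs_of_nonneg (Real.sqrt_nonneg _),
    abs_of_nonneg (add_nonneg (he0 t) zero_le_one), h1]

theorem integral_sqrt_le_sqrt_integral {e : ℝ → ℝ} (he : IntervalIntegrable e volume 0 1)
    (he0 : ∀ t, 0 ≤ e t) : ∫ t in (0:ℝ)..1, √(e t) ≤ √(∫ t in (0:ℝ)..1, e t) := by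
  have : IsProbabilityMeasure (volume.restrict (Ioc (0:ℝ) 1)) := ⟨by simp⟩
  simp only [integral_of_le zero_le_one]
  exact Real.strictConcaveOn_sqrt.concaveOn.le_map_integral Real.continuous_sqrt.continuousOn
    isClosed_Ici (ae_of_all _ fun t => he0 t) he.1 (he.sqrt he0).1

theorem sub_le_sub_of_forall_eventually_nhdsGT {f g : ℝ → ℝ} {p q : ℝ} (hpq : p ≤ q)
    (hf : ContinuousOn f (Icc p q)) (hg : ContinuousOn g (Icc p q))
    (hloc : ∀ t ∈ Ico p q, ∀ᶠ u in 𝓝[>] t, f u - f t ≤ g u - g t) :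
    f q - f p ≤ g q - g p := by
  set S := {t | g p - f p ≤ g t - f t}
  have hS : IsClosed (S ∩ Icc p q) := by
    rw [inter_comm]
    exact (hg.sub hf).preimage_isClosed_of_isClosed isClosed_Icc isClosed_Ici
  have hqS : q ∈ S := hS.Icc_subset_of_forall_exists_gt (by simp [S]) (fun t ht v hv => by
    obtain ⟨u, hu, huv⟩ := ((hloc t ⟨ht.2.1, ht.2.2⟩).and (Ioc_mem_nhdsGT hv)).exists
    exact ⟨u, show g p - f p ≤ g u - f u by linarith [ht.1.out], huv⟩) ⟨hpq, le_rfl⟩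
  linarith [hqS.out]

variable {E : Type*} [NormedAddCommGroup E] [InnerProductSpace ℝ E]

theorem inner_map_le_sqrt_mul_sqrt {T : E →L[ℝ] E} (hsymm : ∀ u v, ⟪T u, v⟫ = ⟪u, T v⟫)
    (hpos : ∀ v, 0 ≤ ⟪v, T v⟫) (u v : E) :
    ⟪u, T v⟫ ≤ √⟪u, T u⟫ * √⟪v, T v⟫ := by
  have hcs := LinearMap.BilinForm.apply_mul_apply_le_of_forall_zero_le
    ((innerₗ E).compl₂ (T : E →ₗ[ℝ] E)) hpos u v
  simp only [LinearMap.compl₂_apply, innerₗ_apply_apply, ContinuousLinearMap.coe_coe] at hcs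
  have hvu : ⟪v, T u⟫ = ⟪u, T v⟫ := by rw [real_inner_comm, hsymm]
  rw [hvu] at hcs
  rw [← Real.sqrt_mul (hpos u)]
  exact Real.le_sqrt_of_sq_le (by rw [sq]; exact hcs)

def IsPrimitiveOn (f ω : ℝ → E) (s : Set ℝ) : Prop :=
  ∀ t ∈ s, ∀ u ∈ s, ω u - ω t = ∫ r in t..u, f r

theorem isPrimitiveOn_of_eq_add_integral {f ω : ℝ → E} {x : E} {p q : ℝ}
    (hf : IntervalIntegrable f volume p q) (h : ∀ t ∈ Icc p q, ω t = x + ∫ r in p..t, f r) :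
    IsPrimitiveOn f ω (Icc p q) := fun t ht u hu => by
  have hp : p ∈ Icc p q := left_mem_Icc.2 (ht.1.trans ht.2)
  rw [h t ht, h u hu, add_sub_add_left_eq_sub,
    integral_interval_sub_left (hf.mono_Icc hp hu) (hf.mono_Icc hp ht)]

theorem IsPrimitiveOn.mono {f ω : ℝ → E} {s s' : Set ℝ} (h : IsPrimitiveOn f ω s')
    (hs : s ⊆ s') : IsPrimitiveOn f ω s := fun t ht u hu => h t (hs ht) u (hs hu)

theorem IsPrimitiveOn.continuousOn {f ω : ℝ → E} {p q : ℝ} (h : IsPrimitiveOn f ω (Icc p q))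
    (hf : IntervalIntegrable f volume p q) : ContinuousOn ω (Icc p q) :=
  ((continuousOn_const.add (continuousOn_primitive_interval' hf left_mem_uIcc)).mono
    Icc_subset_uIcc).congr fun t ht => eq_add_of_sub_eq' (h p ⟨le_rfl, ht.1.trans ht.2⟩ t ht)

section Energy

variable [CompleteSpace E]

theorem ContDiff.continuous_gradient {w : E → ℝ} (hw : ContDiff ℝ 1 w) :
    Continuous (gradient w) :=
  (InnerProductSpace.toDual ℝ E).symm.continuous.comp (hw.continuous_fderiv one_ne_zero)

theorem exists_ball_inner_gradient_lt {a : E → E →L[ℝ] E} (hacont : Continuous a) {w : E → ℝ}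
    (hw : ContDiff ℝ 1 w) {x : E} {c : ℝ} (hx : ⟪gradient w x, a x (gradient w x)⟫ < c) :
    ∃ δ > 0, ∀ z ∈ ball x δ, ∀ z' ∈ ball x δ, ⟪gradient w z, a z' (gradient w z)⟫ < c := by
  have hF : Continuous fun zz : E × E => ⟪gradient w zz.1, a zz.2 (gradient w zz.1)⟫ :=
    (hw.continuous_gradient.comp continuous_fst).inner
      ((hacont.comp continuous_snd).clm_apply (hw.continuous_gradient.comp continuous_fst))
  obtain ⟨δ, hδ, hnear⟩ := Metric.eventually_nhds_iff.1
    ((hF.tendsto (x, x)).eventually (gt_mem_nhds hx))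
  exact ⟨δ, hδ, fun z hz z' hz' =>
    hnear (y := (z, z')) (by rw [Prod.dist_eq]; exact max_lt hz hz')⟩

theorem inner_integral_le_mul_integral_sqrt {A : ℝ → E →L[ℝ] E} {ξ : ℝ → E}
    (hsymm : ∀ s u v, ⟪A s u, v⟫ = ⟪u, A s v⟫) (hpos : ∀ s v, 0 ≤ ⟪v, A s v⟫) {t u : ℝ}
    (htu : t ≤ u) (hf : IntervalIntegrable (fun s => A s (ξ s)) volume t u)
    (hφ : IntervalIntegrable (fun s => √⟪ξ s, A s (ξ s)⟫) volume t u) {g : E} {C : ℝ}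
    (hC : 0 ≤ C) (hg : ∀ s ∈ Icc t u, ⟪g, A s g⟫ ≤ C ^ 2) :
    ⟪g, ∫ s in t..u, A s (ξ s)⟫ ≤ C * ∫ s in t..u, √⟪ξ s, A s (ξ s)⟫ := by
  rw [← intervalIntegral.integral_const_mul, ← innerSL_apply_apply ℝ,
    ← (innerSL ℝ g).intervalIntegral_comp_comm hf]
  refine integral_mono_on htu ⟨hf.1.const_inner g, hf.2.const_inner g⟩ (hφ.const_mul C)
    fun s hs => ?_
  calc ⟪g, A s (ξ s)⟫ ≤ √⟪g, A s g⟫ * √⟪ξ s, A s (ξ s)⟫ :=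
        inner_map_le_sqrt_mul_sqrt (hsymm s) (hpos s) g (ξ s)
    _ ≤ C * √⟪ξ s, A s (ξ s)⟫ :=
        mul_le_mul_of_nonneg_right ((Real.sqrt_le_left hC).2 (hg s hs)) (Real.sqrt_nonneg _)

theorem sub_le_of_forall_mem_segment_inner_gradient_le {w : E → ℝ} (hw : Differentiable ℝ w)
    {x y : E} {M : ℝ} (h : ∀ z ∈ segment ℝ x y, ⟪gradient w z, y - x⟫ ≤ M) :
    w y - w x ≤ M := by
  obtain ⟨z, hz, hwz⟩ := domain_mvt (f' := fderiv ℝ w)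
    (fun z _ => (hw z).hasFDerivAt.hasFDerivWithinAt) (convex_segment x y)
    (left_mem_segment ℝ x y) (right_mem_segment ℝ x y)
  rw [hwz, ← inner_gradient_left]
  exact h z hz

variable {a : E → E →L[ℝ] E} {ω ξ : ℝ → E} {w : E → ℝ} {p q : ℝ}

theorem eventually_sub_le_mul_integral_sqrt_energy (hacont : Continuous a)
    (hasymm : ∀ x u v, ⟪a x u, v⟫ = ⟪u, a x v⟫) (hapos : ∀ x v, 0 ≤ ⟪v, a x v⟫)
    (hω : IsPrimitiveOn (fun s => a (ω s) (ξ s)) ω (Icc p q))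
    (hf : IntervalIntegrable (fun s => a (ω s) (ξ s)) volume p q)
    (hφ : IntervalIntegrable (fun s => √⟪ξ s, a (ω s) (ξ s)⟫) volume p q)
    (hw : ContDiff ℝ 1 w) (hwgrad : ∀ z, ⟪gradient w z, a z (gradient w z)⟫ ≤ 1)
    {t : ℝ} (ht : t ∈ Ico p q) {C : ℝ} (hC : 1 < C) :
    ∀ᶠ u in 𝓝[>] t, w (ω u) - w (ω t) ≤ C * ∫ s in t..u, √⟪ξ s, a (ω s) (ξ s)⟫ := by
  have ht' : t ∈ Icc p q := Ico_subset_Icc_self ht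
  obtain ⟨δ, hδ, hball⟩ := exists_ball_inner_gradient_lt hacont hw
    ((hwgrad (ω t)).trans_lt (one_lt_pow₀ hC two_ne_zero))
  obtain ⟨η, hη, hnear⟩ := Metric.mem_nhdsWithin_iff.1
    (hω.continuousOn hf t ht' (ball_mem_nhds _ hδ))
  filter_upwards [Ioo_mem_nhdsGT (lt_min ht.2 (lt_add_of_pos_right t hη))] with u hu
  have htu : Icc t u ⊆ Icc p q := Icc_subset_Icc ht.1 (hu.2.le.trans (min_le_left _ _))
  have hu' : u ∈ Icc p q := htu ⟨hu.1.le, le_rfl⟩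
  have hmaps : ∀ s ∈ Icc t u, ω s ∈ ball (ω t) δ := fun s hs => hnear ⟨by
    rw [mem_ball, Real.dist_eq, abs_of_nonneg (sub_nonneg.2 hs.1)]
    linarith [hs.2, hu.2.trans_le (min_le_right _ _)], htu hs⟩
  refine sub_le_of_forall_mem_segment_inner_gradient_le (hw.differentiable one_ne_zero)
    fun z hz => ?_
  have hz' : z ∈ ball (ω t) δ :=
    (convex_ball _ _).segment_subset (mem_ball_self hδ) (hmaps u ⟨hu.1.le, le_rfl⟩) hz
  rw [hω t ht' u hu']
  exact inner_integral_le_mul_integral_sqrt (fun s => hasymm (ω s)) (fun s => hapos (ω s))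
    hu.1.le (hf.mono_Icc ht' hu') (hφ.mono_Icc ht' hu') (by positivity)
    fun s hs => (hball z hz' (ω s) (hmaps s hs)).le

theorem sub_le_integral_sqrt_energy (hacont : Continuous a)
    (hasymm : ∀ x u v, ⟪a x u, v⟫ = ⟪u, a x v⟫) (hapos : ∀ x v, 0 ≤ ⟪v, a x v⟫)
    (hω : IsPrimitiveOn (fun s => a (ω s) (ξ s)) ω (Icc p q))
    (hf : IntervalIntegrable (fun s => a (ω s) (ξ s)) volume p q)
    (hφ : IntervalIntegrable (fun s => √⟪ξ s, a (ω s) (ξ s)⟫) volume p q)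
    (hw : ContDiff ℝ 1 w) (hwgrad : ∀ z, ⟪gradient w z, a z (gradient w z)⟫ ≤ 1)
    (hpq : p ≤ q) :
    w (ω q) - w (ω p) ≤ ∫ s in p..q, √⟪ξ s, a (ω s) (ξ s)⟫ := by
  have hp : p ∈ Icc p q := left_mem_Icc.2 hpq
  have hbound : ∀ C > 1, w (ω q) - w (ω p) ≤ C * ∫ s in p..q, √⟪ξ s, a (ω s) (ξ s)⟫ := by
    intro C hC
    have hprim : ContinuousOn (fun t => C * ∫ s in p..t, √⟪ξ s, a (ω s) (ξ s)⟫) (Icc p q) :=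
      continuousOn_const.mul ((continuousOn_primitive_interval' hφ left_mem_uIcc).mono
        Icc_subset_uIcc)
    simpa using sub_le_sub_of_forall_eventually_nhdsGT hpq
      (hw.continuous.comp_continuousOn (hω.continuousOn hf)) hprim fun t ht => by
        filter_upwards [eventually_sub_le_mul_integral_sqrt_energy hacont hasymm hapos hω hf hφ
          hw hwgrad ht hC, Ioo_mem_nhdsGT ht.2] with u hu huq
        have hu' : u ∈ Icc p q := ⟨ht.1.trans huq.1.le, huq.2.le⟩
        rw [Function.comp_apply, Function.comp_apply, ← mul_sub, integral_interval_sub_left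
          (hφ.mono_Icc hp hu') (hφ.mono_Icc hp (Ico_subset_Icc_self ht))]
        exact hu
  have hlim : Tendsto (fun C : ℝ => C * ∫ s in p..q, √⟪ξ s, a (ω s) (ξ s)⟫) (𝓝[>] 1)
      (𝓝 (∫ s in p..q, √⟪ξ s, a (ω s) (ξ s)⟫)) :=
    ((continuous_mul_const _).tendsto' 1 _ (one_mul _)).mono_left nhdsWithin_le_nhds
  exact ge_of_tendsto hlim (eventually_nhdsWithin_of_forall hbound)

end Energy

theorem dual_distance_upper_bound_general (d : ℕ)
    (a : EuclideanSpace ℝ (Fin d) → EuclideanSpace ℝ (Fin d) →L[ℝ] EuclideanSpace ℝ (Fin d))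
    (hacont : Continuous a)
    (hasymm : ∀ x u v, ⟪a x u, v⟫ = ⟪u, a x v⟫)
    (hapos : ∀ x v, 0 ≤ ⟪v, a x v⟫)
    (x y : EuclideanSpace ℝ (Fin d))
    (ω ξ : ℝ → EuclideanSpace ℝ (Fin d))
    (hω0 : ω 0 = x) (hω1 : ω 1 = y)
    (hξint : IntervalIntegrable (fun s => a (ω s) (ξ s)) volume 0 1)
    (hAC : ∀ t ∈ Icc (0:ℝ) 1, ω t = x + ∫ s in (0:ℝ)..t, a (ω s) (ξ s))
    (hEint : IntervalIntegrable (fun t => ⟪ξ t, a (ω t) (ξ t)⟫) volume 0 1)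
    (K : Set (EuclideanSpace ℝ (Fin d)))
    (hhit : ∃ t ∈ Icc (0:ℝ) 1, ω t ∈ K)
    (wm wp : EuclideanSpace ℝ (Fin d) → ℝ)
    (hwm : ContDiff ℝ 1 wm) (hwp : ContDiff ℝ 1 wp)
    (hwmgrad : ∀ z, ⟪gradient wm z, a z (gradient wm z)⟫ ≤ 1)
    (hwpgrad : ∀ z, ⟪gradient wp z, a z (gradient wp z)⟫ ≤ 1)
    (hwK : ∀ z ∈ K, wp z = wm z) :
    wp y - wm x ≤ Real.sqrt (∫ t in (0:ℝ)..1, ⟪ξ t, a (ω t) (ξ t)⟫) := by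
  obtain ⟨t₀, ht₀, hωt₀⟩ := hhit
  have hω := isPrimitiveOn_of_eq_add_integral hξint hAC
  have hφ := hEint.sqrt fun t => hapos (ω t) (ξ t)
  have h0 : (0:ℝ) ∈ Icc (0:ℝ) 1 := left_mem_Icc.2 zero_le_one
  have h1 : (1:ℝ) ∈ Icc (0:ℝ) 1 := right_mem_Icc.2 zero_le_one
  have hm := sub_le_integral_sqrt_energy hacont hasymm hapos
    (hω.mono (Icc_subset_Icc le_rfl ht₀.2)) (hξint.mono_Icc h0 ht₀) (hφ.mono_Icc h0 ht₀)
    hwm hwmgrad ht₀.1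
  have hp := sub_le_integral_sqrt_energy hacont hasymm hapos
    (hω.mono (Icc_subset_Icc ht₀.1 le_rfl)) (hξint.mono_Icc ht₀ h1) (hφ.mono_Icc ht₀ h1)
    hwp hwpgrad ht₀.2
  calc wp y - wm x = (wm (ω t₀) - wm (ω 0)) + (wp (ω 1) - wp (ω t₀)) := by
        rw [hω0, hω1, hwK _ hωt₀]; ring
    _ ≤ ∫ t in (0:ℝ)..1, √⟪ξ t, a (ω t) (ξ t)⟫ := by
        rw [← integral_add_adjacent_intervals (hφ.mono_Icc h0 ht₀) (hφ.mono_Icc ht₀ h1)]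
        exact add_le_add hm hp
    _ ≤ √(∫ t in (0:ℝ)..1, ⟪ξ t, a (ω t) (ξ t)⟫) :=
        integral_sqrt_le_sqrt_integral hEint fun t => hapos (ω t) (ξ t)

/-- Let `a` be a continuous nonnegative symmetric quadratic form (in a chart, on `ℝ^d`),
let `ω ∈ H^{x,y}` be an absolutely continuous finite-energy path with driving path `ξ`
(`ω t = x + ∫_0^t a(ω s) ξ s ds`) passing through the closed set `K`.  If `w⁻, w⁺` are
`C¹` functions with `a(∇w^±, ∇w^±) ≤ 1` everywhere and `w⁺ = w⁻` on `K`, then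
`w⁺(y) − w⁻(x) ≤ √(I(ω))`. -/
theorem dual_distance_upper_bound (d : ℕ)
    (a : EuclideanSpace ℝ (Fin d) → EuclideanSpace ℝ (Fin d) →L[ℝ] EuclideanSpace ℝ (Fin d))
    (hacont : Continuous a)
    (hasymm : ∀ x u v, ⟪a x u, v⟫ = ⟪u, a x v⟫)
    (hapos : ∀ x v, 0 ≤ ⟪v, a x v⟫)
    (x y : EuclideanSpace ℝ (Fin d))
    (ω ξ : ℝ → EuclideanSpace ℝ (Fin d))
    (hω0 : ω 0 = x) (hω1 : ω 1 = y)
    (hξint : IntervalIntegrable (fun s => a (ω s) (ξ s)) volume 0 1)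
    (hAC : ∀ t ∈ Icc (0:ℝ) 1, ω t = x + ∫ s in (0:ℝ)..t, a (ω s) (ξ s))
    (hEint : IntervalIntegrable (fun t => ⟪ξ t, a (ω t) (ξ t)⟫) volume 0 1)
    (K : Set (EuclideanSpace ℝ (Fin d))) (hK : IsClosed K)
    (hhit : ∃ t ∈ Icc (0:ℝ) 1, ω t ∈ K)
    (wm wp : EuclideanSpace ℝ (Fin d) → ℝ)
    (hwm : ContDiff ℝ 1 wm) (hwp : ContDiff ℝ 1 wp)
    (hwmgrad : ∀ z, ⟪gradient wm z, a z (gradient wm z)⟫ ≤ 1)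
    (hwpgrad : ∀ z, ⟪gradient wp z, a z (gradient wp z)⟫ ≤ 1)
    (hwK : ∀ z ∈ K, wp z = wm z) :
    wp y - wm x ≤ Real.sqrt (∫ t in (0:ℝ)..1, ⟪ξ t, a (ω t) (ξ t)⟫) :=
  dual_distance_upper_bound_general d a hacont hasymm hapos x y ω ξ hω0 hω1 hξint hAC hEint K hhit
    wm wp hwm hwp hwmgrad hwpgrad hwK
end
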